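/- arXiv:1709.02573 — 6 statements merged into one kernel-verified Lean document; each statement's English description precedes it below -/
import Mathlib

section
/- If X is a Hausdorff topological space and k ≥ 1, then the k-th symmetric potency exp_k(X), with the quotient topology induced by π : X^k → exp_k(X), is Hausdorff. -/
open Set

/-- The `k`-th symmetric potency: nonempty subsets of `X` of cardinality at most `k`. -/
def SymPot (X : Type*) (k : ℕ) : Type _ :=
  {A : Set X // 0 < A.ncard ∧ A.ncard ≤ k}

/-- The canonical projection `π : X^k → exp_k X`. -/
def symPotProj (X : Type*) (k : ℕ) [NeZero k] : (Fin k → X) → SymPot X k :=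
  fun x => ⟨Set.range x, by
    constructor
    · exact (Set.ncard_pos (Set.finite_range x)).mpr (Set.range_nonempty x)
    · calc (Set.range x).ncard = Nat.card (Set.range x) := (Nat.card_coe_set_eq _).symm
        _ ≤ Nat.card (Fin k) := Finite.card_range_le x
        _ = k := Nat.card_eq_fintype_card.trans (Fintype.card_fin k)⟩

/-- The quotient topology on `exp_k X` induced by `π`. -/
instance (X : Type*) (k : ℕ) [TopologicalSpace X] [NeZero k] :
    TopologicalSpace (SymPot X k) :=
  TopologicalSpace.coinduced (symPotProj X k) inferInstance

/-!
Since `0 < ncard A` forces `A` to be finite and nonempty, `exp_k X` sits injectively inside the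
space of nonempty compact subsets of `X`. That inclusion is continuous for the Vietoris topology,
because `x ↦ range x` is Vietoris-continuous on `X^k`, and the Vietoris topology is Hausdorff
when `X` is; so the finer quotient topology is Hausdorff as well.
-/

open TopologicalSpace

namespace SymPot

variable {X : Type*} {k : ℕ}

theorem finite (A : SymPot X k) : A.1.Finite :=
  Set.finite_of_ncard_pos A.2.1

theorem nonempty (A : SymPot X k) : A.1.Nonempty :=
  Set.nonempty_of_ncard_ne_zero A.2.1.ne'

variable [TopologicalSpace X]

attribute [local instance] TopologicalSpace.vietoris

def toNonemptyCompacts (A : SymPot X k) : NonemptyCompacts X :=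
  ⟨⟨A.1, A.finite.isCompact⟩, A.nonempty⟩

theorem toNonemptyCompacts_injective :
    Function.Injective (toNonemptyCompacts : SymPot X k → NonemptyCompacts X) :=
  fun _ _ h => Subtype.ext (congrArg ((↑) : NonemptyCompacts X → Set X) h)

theorem continuous_toNonemptyCompacts [NeZero k] :
    Continuous (toNonemptyCompacts : SymPot X k → NonemptyCompacts X) :=
  continuous_coinduced_dom.mpr <|
    NonemptyCompacts.isEmbedding_coe.continuous_iff.mpr vietoris.continuous_range_of_finite

end SymPot

/-- if `X` is Hausdorff then so is `exp_k X`. -/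
theorem symPot_t2 (X : Type*) [TopologicalSpace X] [T2Space X] (k : ℕ) [NeZero k] :
    T2Space (SymPot X k) :=
  .of_injective_continuous SymPot.toNonemptyCompacts_injective
    SymPot.continuous_toNonemptyCompacts
end

section
/- The map p : P → exp_3(S¹), p(x,y,z) = {e^{2πix}, e^{2πiy}, e^{2πiz}}, is surjective, where P = {(x,y,z) ∈ ℝ³ : x ≤ y ≤ z ≤ x+1 and 0 ≤ x+y+z ≤ 1}. -/
open Set Real

/-- Morton's prism `P`. -/
def prismP : Set (ℝ × ℝ × ℝ) :=
  {v | v.1 ≤ v.2.1 ∧ v.2.1 ≤ v.2.2 ∧ v.2.2 ≤ v.1 + 1 ∧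
    0 ≤ v.1 + v.2.1 + v.2.2 ∧ v.1 + v.2.1 + v.2.2 ≤ 1}

/-- The subset `{a, b, c}` of the circle, as an element of `exp_3 S¹`. -/
def tripleSet (a b c : Circle) : SymPot Circle 3 :=
  ⟨{a, b, c}, by
    refine ⟨(Set.ncard_pos (Set.toFinite _)).mpr ⟨a, by simp⟩, ?_⟩
    calc ({a, b, c} : Set Circle).ncard ≤ ({b, c} : Set Circle).ncard + 1 :=
          Set.ncard_insert_le a _
      _ ≤ (({c} : Set Circle).ncard + 1) + 1 := by
          exact Nat.add_le_add_right (Set.ncard_insert_le b _) 1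
      _ = 3 := by rw [Set.ncard_singleton]⟩

/-- The map `p : P → exp_3 S¹`, `p (x,y,z) = {e^{2πix}, e^{2πiy}, e^{2πiz}}`. -/
noncomputable def prismMap (v : prismP) : SymPot Circle 3 :=
  tripleSet (Circle.exp (2 * π * v.1.1)) (Circle.exp (2 * π * v.1.2.1))
    (Circle.exp (2 * π * v.1.2.2))

/-! The three points lift to angles `0 ≤ t₁ ≤ t₂ ≤ t₃ < 1`, whose sum lies in `[0, 3)`. The cyclic
shift `(t₁, t₂, t₃) ↦ (t₃ - 1, t₁, t₂)` keeps the triple ordered with `t₃ ≤ t₁ + 1`, does not change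
the points on the circle, and lowers the sum by `1`; so after at most two shifts the sum lies in
`[0, 1]` and the triple is a point of the prism. -/

theorem Set.exists_eq_triple_of_ncard_le_three {X : Type*} {A : Set X} (hpos : 0 < A.ncard)
    (hle : A.ncard ≤ 3) : ∃ a b c : X, A = {a, b, c} := by
  obtain h | h | h : A.ncard = 1 ∨ A.ncard = 2 ∨ A.ncard = 3 := by omega
  · obtain ⟨a, rfl⟩ := Set.ncard_eq_one.mp h
    exact ⟨a, a, a, by simp⟩
  · obtain ⟨a, b, -, rfl⟩ := Set.ncard_eq_two.mp h
    exact ⟨a, b, b, by simp⟩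
  · obtain ⟨a, b, c, -, -, -, rfl⟩ := Set.ncard_eq_three.mp h
    exact ⟨a, b, c, rfl⟩

theorem Set.exists_monotone_triple_eq {α : Type*} [LinearOrder α] (a b c : α) :
    ∃ x y z : α, x ≤ y ∧ y ≤ z ∧ ({a, b, c} : Set α) = {x, y, z} := by
  rcases le_total a b with hab | hab <;> rcases le_total b c with hbc | hbc <;>
    rcases le_total a c with hac | hac
  all_goals first
    | exact ⟨a, b, c, hab, hbc, rfl⟩
    | exact ⟨a, c, b, hac, hbc, by rw [pair_comm]⟩
    | exact ⟨b, a, c, hab, hac, by rw [insert_comm]⟩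
    | exact ⟨b, c, a, hbc, hac, by rw [insert_comm, pair_comm]⟩
    | exact ⟨c, a, b, hac, hab, by rw [pair_comm, insert_comm]⟩
    | exact ⟨c, b, a, hbc, hab, by rw [insert_comm, pair_comm, insert_comm]⟩

theorem Circle.periodic_exp_two_pi_mul :
    Function.Periodic (fun t : ℝ ↦ Circle.exp (2 * π * t)) 1 := fun t ↦ by
  simp only [mul_add, mul_one]
  exact Circle.periodic_exp _

theorem Circle.exists_mem_Ico_exp_two_pi_mul_eq (a : Circle) :
    ∃ t ∈ Ico (0 : ℝ) 1, Circle.exp (2 * π * t) = a := by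
  obtain ⟨θ, rfl⟩ := Circle.exp_surjective a
  obtain ⟨t, ht, he⟩ := Circle.periodic_exp_two_pi_mul.exists_mem_Ico₀ one_pos (θ / (2 * π))
  refine ⟨t, ht, he.symm.trans ?_⟩
  simp only [mul_div_cancel₀ _ two_pi_pos.ne']

theorem Circle.exists_sorted_angles (a b c : Circle) :
    ∃ t₁ t₂ t₃ : ℝ, 0 ≤ t₁ ∧ t₁ ≤ t₂ ∧ t₂ ≤ t₃ ∧ t₃ < 1 ∧
      ({a, b, c} : Set Circle) =
        {Circle.exp (2 * π * t₁), Circle.exp (2 * π * t₂), Circle.exp (2 * π * t₃)} := by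
  obtain ⟨s₁, hs₁, rfl⟩ := Circle.exists_mem_Ico_exp_two_pi_mul_eq a
  obtain ⟨s₂, hs₂, rfl⟩ := Circle.exists_mem_Ico_exp_two_pi_mul_eq b
  obtain ⟨s₃, hs₃, rfl⟩ := Circle.exists_mem_Ico_exp_two_pi_mul_eq c
  obtain ⟨t₁, t₂, t₃, h₁₂, h₂₃, hsort⟩ := Set.exists_monotone_triple_eq s₁ s₂ s₃
  have hIco : ({s₁, s₂, s₃} : Set ℝ) ⊆ Ico 0 1 := by
    simp only [insert_subset_iff, singleton_subset_iff]
    exact ⟨hs₁, hs₂, hs₃⟩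
  rw [hsort, insert_subset_iff, insert_subset_iff, singleton_subset_iff] at hIco
  refine ⟨t₁, t₂, t₃, hIco.1.1, h₁₂, h₂₃, hIco.2.2.2, ?_⟩
  simpa only [image_insert_eq, image_singleton] using
    congrArg (fun s ↦ (fun t ↦ Circle.exp (2 * π * t)) '' s) hsort

theorem exists_mem_prismP_image_eq {β : Type*} {f : ℝ → β} (hf : Function.Periodic f 1)
    {t₁ t₂ t₃ : ℝ} (h₁ : 0 ≤ t₁) (h₁₂ : t₁ ≤ t₂) (h₂₃ : t₂ ≤ t₃) (h₃ : t₃ < 1) :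
    ∃ v ∈ prismP, ({f v.1, f v.2.1, f v.2.2} : Set β) = {f t₁, f t₂, f t₃} := by
  rcases le_or_gt (t₁ + t₂ + t₃) 1 with hs | hs
  · exact ⟨(t₁, t₂, t₃), ⟨h₁₂, h₂₃, by linarith, by linarith, hs⟩, rfl⟩
  rcases le_or_gt (t₁ + t₂ + t₃) 2 with hs' | hs'
  · refine ⟨(t₃ - 1, t₁, t₂), ⟨by linarith, h₁₂, by linarith, by linarith, by linarith⟩, ?_⟩
    rw [hf.sub_eq, insert_comm (f t₃), pair_comm (f t₃)]
  · refine ⟨(t₂ - 1, t₃ - 1, t₁),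
      ⟨by linarith, by linarith, by linarith, by linarith, by linarith⟩, ?_⟩
    rw [hf.sub_eq, hf.sub_eq, pair_comm (f t₃), insert_comm (f t₂)]

/-- `p : P → exp_3 S¹` is surjective. -/
theorem prismMap_surjective : Function.Surjective prismMap := by
  rintro ⟨A, hpos, hle⟩
  obtain ⟨a, b, c, rfl⟩ := Set.exists_eq_triple_of_ncard_le_three hpos hle
  obtain ⟨t₁, t₂, t₃, h₁, h₁₂, h₂₃, h₃, habc⟩ := Circle.exists_sorted_angles a b c
  obtain ⟨v, hv, hpoints⟩ :=
    exists_mem_prismP_image_eq Circle.periodic_exp_two_pi_mul h₁ h₁₂ h₂₃ h₃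
  exact ⟨⟨v, hv⟩, Subtype.ext (hpoints.trans habc.symm)⟩
end

section
/- The prism P = {(x,y,z) ∈ ℝ³ : x ≤ y ≤ z ≤ x+1, 0 ≤ x+y+z ≤ 1} is the convex hull of the six points (0,0,0), (−2/3,1/3,1/3), (−1/3,−1/3,2/3), (0,0,1), (1/3,1/3,1/3), (−1/3,2/3,2/3). -/
open Set Real

/-!
Write `s = x + y + z`. The prism is a triangle times the segment `0 ≤ s ≤ 1`: the first three
points span the face `s = 0`, and the last three are the same triangle translated by
`(1/3, 1/3, 1/3)` to the face `s = 1`, the translation `(x, y, z) ↦ (x, y, z) + t • (1, 1, 1)`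
preserving the cross-section `x ≤ y ≤ z ≤ x + 1`. A point of the prism has barycentric coordinates
`(x + 1 - z, y - x, z - y)` in its cross-section and `(1 - s, s)` along the segment, and their
products are convex weights on the six vertices. Conversely the prism is cut out by linear
inequalities, so it is convex, and it contains the six vertices.
-/

theorem convex_prismP : Convex ℝ prismP := by
  rintro ⟨x, y, z⟩ ⟨h₁, h₂, h₃, h₄, h₅⟩ ⟨x', y', z'⟩ ⟨h₁', h₂', h₃', h₄', h₅'⟩ a b ha hb hab
  simp only [prismP, mem_ofPred_eq, Prod.smul_mk, Prod.mk_add_mk, smul_eq_mul] at *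
  refine ⟨?_, ?_, ?_, ?_, ?_⟩ <;> nlinarith

theorem prismP_subset_convexHull :
    prismP ⊆ convexHull ℝ
      ({(0, 0, 0), (-2/3, 1/3, 1/3), (-1/3, -1/3, 2/3),
        (0, 0, 1), (1/3, 1/3, 1/3), (-1/3, 2/3, 2/3)} : Set (ℝ × ℝ × ℝ)) := by
  rintro ⟨x, y, z⟩ ⟨hxy, hyz, hzx, hs₀, hs₁⟩
  set s := x + y + z
  have hα : 0 ≤ x + 1 - z := by linarith
  have hβ : 0 ≤ y - x := by linarith
  have hγ : 0 ≤ z - y := by linarith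
  have hs₁' : 0 ≤ 1 - s := by linarith
  refine mem_convexHull_of_exists_fintype
    ![(1 - s) * (x + 1 - z), (1 - s) * (y - x), (1 - s) * (z - y),
      s * (z - y), s * (x + 1 - z), s * (y - x)]
    ![(0, 0, 0), (-2/3, 1/3, 1/3), (-1/3, -1/3, 2/3),
      (0, 0, 1), (1/3, 1/3, 1/3), (-1/3, 2/3, 2/3)] ?_ ?_ ?_ ?_
  · intro i
    fin_cases i <;> apply mul_nonneg <;> assumption
  · simp only [Fin.sum_univ_six, Matrix.cons_val]
    ring
  · intro i
    fin_cases i <;> simp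
  · simp only [Fin.sum_univ_six, Matrix.cons_val, Prod.smul_mk, smul_eq_mul, Prod.mk_add_mk]
    ext <;> simp only [s] <;> ring

/-- `P` is the convex hull of its six vertices. -/
theorem prismP_eq_convexHull :
    prismP = convexHull ℝ
      ({(0, 0, 0), (-2/3, 1/3, 1/3), (-1/3, -1/3, 2/3),
        (0, 0, 1), (1/3, 1/3, 1/3), (-1/3, 2/3, 2/3)} : Set (ℝ × ℝ × ℝ)) := by
  refine prismP_subset_convexHull.antisymm (convexHull_min ?_ convex_prismP)
  simp only [insert_subset_iff, singleton_subset_iff, prismP, mem_ofPred_eq]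
  norm_num
end

section
/- Let p : P → exp_3(S¹) be p(x,y,z) = {e^{2πix}, e^{2πiy}, e^{2πiz}}, where P = {(x,y,z) ∈ ℝ³ : x ≤ y ≤ z ≤ x+1, 0 ≤ x+y+z ≤ 1}. Then the induced map p̄ : P/∼ → exp_3(S¹), where (u ∼ v) ⟺ (p(u) = p(v)) and P/∼ has the quotient topology, is a homeomorphism. -/
open Set Real

/-!
The prism `P` is compact and `exp_3 S¹` is Hausdorff (`exp_k X` injects continuously into the
compact subsets of `X` with the Vietoris topology), so the continuous map `p` is a quotient map as
soon as it is surjective, and `P/∼` is then its quotient by its own fibres.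

For surjectivity, lift the three points to `(-1, 0]` and sort the lifts: this gives
`x ≤ y ≤ z ≤ x + 1` with `x + y + z ≤ 0`. The shift `(x, y, z) ↦ (y, z, x + 1)` lifts the same
set, preserves these inequalities and raises `x + y + z` by `1`, so iterating it lands the sum
in `[0, 1]`.
-/

open Function Topology TopologicalSpace

namespace SymPot

variable {X : Type*} [TopologicalSpace X]

theorem continuous_symPotProj {k : ℕ} [NeZero k] : Continuous (symPotProj X k) :=
  continuous_coinduced_rng

def toCompacts {k : ℕ} (A : SymPot X k) : Compacts X :=
  ⟨A.1, (finite_of_ncard_pos A.2.1).isCompact⟩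

theorem toCompacts_injective {k : ℕ} : Injective (toCompacts : SymPot X k → Compacts X) :=
  fun _ _ h => Subtype.ext (congrArg SetLike.coe h)

attribute [local instance] TopologicalSpace.vietoris in
theorem continuous_toCompacts {k : ℕ} [NeZero k] :
    Continuous (toCompacts : SymPot X k → Compacts X) :=
  continuous_coinduced_dom.2 <|
    Compacts.isEmbedding_coe.continuous_iff.2 vietoris.continuous_range_of_finite

instance {k : ℕ} [NeZero k] [T2Space X] : T2Space (SymPot X k) :=
  .of_injective_continuous toCompacts_injective continuous_toCompacts

end SymPot

theorem SymPot.exists_eq_triple {X : Type*} (A : SymPot X 3) :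
    ∃ a b c : X, A.1 = {a, b, c} := by
  obtain ⟨hpos, hle⟩ := A.2
  obtain h | h | h : A.1.ncard = 1 ∨ A.1.ncard = 2 ∨ A.1.ncard = 3 := by omega
  · obtain ⟨a, ha⟩ := ncard_eq_one.mp h
    exact ⟨a, a, a, by simp [ha]⟩
  · obtain ⟨a, b, -, hab⟩ := ncard_eq_two.mp h
    exact ⟨a, a, b, by simp [hab]⟩
  · obtain ⟨a, b, c, -, -, -, habc⟩ := ncard_eq_three.mp h
    exact ⟨a, b, c, habc⟩

theorem exists_sorted_triple {α : Type*} [LinearOrder α] (a b c : α) :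
    ∃ x y z : α, x ≤ y ∧ y ≤ z ∧ ({x, y, z} : Set α) = {a, b, c} := by
  rcases le_total a b with hab | hab <;> rcases le_total b c with hbc | hbc <;>
    rcases le_total a c with hac | hac
  · exact ⟨a, b, c, hab, hbc, rfl⟩
  · exact ⟨a, b, c, hab, hbc, rfl⟩
  · exact ⟨a, c, b, hac, hbc, by ext; simp; tauto⟩
  · exact ⟨c, a, b, hac, hab, by ext; simp; tauto⟩
  · exact ⟨b, a, c, hab, hac, by ext; simp; tauto⟩
  · exact ⟨b, c, a, hbc, hac, by ext; simp; tauto⟩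
  · exact ⟨c, b, a, hbc, hab, by ext; simp; tauto⟩
  · exact ⟨c, b, a, hbc, hab, by ext; simp; tauto⟩

noncomputable def expTurn (t : ℝ) : Circle :=
  Circle.exp (2 * π * t)

@[fun_prop]
theorem continuous_expTurn : Continuous expTurn := by
  unfold expTurn; fun_prop

theorem expTurn_periodic : Periodic expTurn 1 := fun t => by
  rw [expTurn, mul_add, mul_one, Circle.exp_add_two_pi, expTurn]

theorem expTurn_surjective : Surjective expTurn := fun d => by
  obtain ⟨θ, rfl⟩ := Circle.exp_surjective d
  exact ⟨θ / (2 * π), by rw [expTurn, mul_div_cancel₀ θ two_pi_pos.ne']⟩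

theorem exists_expTurn_eq_mem_Ioc (d : Circle) : ∃ t ∈ Ioc (-1 : ℝ) 0, expTurn t = d := by
  obtain ⟨s, rfl⟩ := expTurn_surjective d
  obtain ⟨t, ht, hst⟩ := expTurn_periodic.exists_mem_Ioc one_pos s (-1)
  exact ⟨t, by simpa using ht, hst.symm⟩

def expTriple (v : ℝ × ℝ × ℝ) : Set Circle :=
  {expTurn v.1, expTurn v.2.1, expTurn v.2.2}

def cyclicChamber : Set (ℝ × ℝ × ℝ) :=
  {v | v.1 ≤ v.2.1 ∧ v.2.1 ≤ v.2.2 ∧ v.2.2 ≤ v.1 + 1}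

def cyclicShift (v : ℝ × ℝ × ℝ) : ℝ × ℝ × ℝ :=
  (v.2.1, v.2.2, v.1 + 1)

theorem mapsTo_cyclicShift_cyclicChamber : MapsTo cyclicShift cyclicChamber cyclicChamber :=
  fun _ ⟨hxy, hyz, hzx⟩ => ⟨hyz, hzx, by simp only [cyclicShift]; linarith⟩

theorem expTriple_cyclicShift (v : ℝ × ℝ × ℝ) :
    expTriple (cyclicShift v) = expTriple v := by
  rw [expTriple, cyclicShift, expTurn_periodic, pair_comm, insert_comm]
  rfl

theorem expTriple_iterate_cyclicShift (n : ℕ) (v : ℝ × ℝ × ℝ) :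
    expTriple (cyclicShift^[n] v) = expTriple v := by
  induction n with
  | zero => rfl
  | succ n ih => rw [iterate_succ_apply', expTriple_cyclicShift, ih]

theorem sum_iterate_cyclicShift (n : ℕ) (v : ℝ × ℝ × ℝ) :
    (cyclicShift^[n] v).1 + (cyclicShift^[n] v).2.1 + (cyclicShift^[n] v).2.2 =
      v.1 + v.2.1 + v.2.2 + n := by
  induction n with
  | zero => simp
  | succ n ih =>
    rw [iterate_succ_apply']
    simp only [cyclicShift, Nat.cast_succ]
    linarith

theorem exists_cyclicChamber_expTriple_eq (A : SymPot Circle 3) :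
    ∃ v ∈ cyclicChamber, v.1 + v.2.1 + v.2.2 ≤ 0 ∧ expTriple v = A.1 := by
  obtain ⟨a, b, c, hA⟩ := A.exists_eq_triple
  obtain ⟨ta, hta, rfl⟩ := exists_expTurn_eq_mem_Ioc a
  obtain ⟨tb, htb, rfl⟩ := exists_expTurn_eq_mem_Ioc b
  obtain ⟨tc, htc, rfl⟩ := exists_expTurn_eq_mem_Ioc c
  obtain ⟨x, y, z, hxy, hyz, hxyz⟩ := exists_sorted_triple ta tb tc
  have hIoc : ({x, y, z} : Set ℝ) ⊆ Ioc (-1) 0 := by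
    rw [hxyz]; exact insert_subset hta (insert_subset htb (singleton_subset_iff.2 htc))
  obtain ⟨hx, hx₀⟩ : x ∈ Ioc (-1) 0 := hIoc (by simp)
  obtain ⟨-, hy₀⟩ : y ∈ Ioc (-1) 0 := hIoc (by simp)
  obtain ⟨-, hz₀⟩ : z ∈ Ioc (-1) 0 := hIoc (by simp)
  refine ⟨(x, y, z), ⟨hxy, hyz, by dsimp only; linarith⟩, by dsimp only; linarith, ?_⟩
  have := congrArg (expTurn '' ·) hxyz
  simp only [image_insert_eq, image_singleton] at this
  rw [hA, ← this]
  rfl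

theorem prismMap_surjective_s12 : Surjective prismMap := by
  intro A
  obtain ⟨v, hv, hsum, hA⟩ := exists_cyclicChamber_expTriple_eq A
  set n := ⌈-(v.1 + v.2.1 + v.2.2)⌉₊
  have hn := Nat.le_ceil (-(v.1 + v.2.1 + v.2.2))
  have hn' := Nat.ceil_lt_add_one (neg_nonneg.2 hsum)
  have hshift := sum_iterate_cyclicShift n v
  obtain ⟨h₁, h₂, h₃⟩ := mapsTo_cyclicShift_cyclicChamber.iterate n hv
  exact ⟨⟨cyclicShift^[n] v, h₁, h₂, h₃, by linarith, by linarith⟩,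
    Subtype.ext ((expTriple_iterate_cyclicShift n v).trans hA)⟩

theorem prismMap_eq_symPotProj (v : prismP) :
    prismMap v = symPotProj Circle 3 ![expTurn v.1.1, expTurn v.1.2.1, expTurn v.1.2.2] := by
  refine Subtype.ext ?_
  simp only [symPotProj, Matrix.range_cons, Matrix.range_empty, union_empty, singleton_union]
  rfl

theorem continuous_prismMap : Continuous prismMap := by
  rw [funext prismMap_eq_symPotProj]
  exact SymPot.continuous_symPotProj.comp (by fun_prop)

theorem isCompact_prismP : IsCompact prismP := by
  have hclosed : IsClosed prismP := by
    simp only [prismP, ofPred_and]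
    apply_rules [IsClosed.inter, isClosed_le] <;> fun_prop
  refine (isCompact_Icc (a := ((-1 : ℝ), -1, -1)) (b := (2, 2, 2))).of_isClosed_subset hclosed ?_
  rintro ⟨x, y, z⟩ ⟨h₁, h₂, h₃, h₄, h₅⟩
  simp only [mem_Icc, Prod.mk_le_mk]
  refine ⟨⟨?_, ?_, ?_⟩, ?_, ?_, ?_⟩ <;> linarith

/-- the induced map `p̄ : P/∼ → exp_3 S¹` is a homeomorphism. -/
theorem prismMap_quotient_homeomorph :
    ∃ h : Quotient (Setoid.ker prismMap) ≃ₜ SymPot Circle 3,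
      ∀ v : prismP, h (Quotient.mk _ v) = prismMap v := by
  have : CompactSpace prismP := isCompact_iff_compactSpace.mp isCompact_prismP
  let p : C(prismP, SymPot Circle 3) := ⟨prismMap, continuous_prismMap⟩
  have hp : IsQuotientMap p := .of_surjective_continuous prismMap_surjective_s12 continuous_prismMap
  exact ⟨hp.homeomorph, fun _ => rfl⟩
end

section
/- Let P = {(x,y,z) ∈ ℝ³ : x ≤ y ≤ z ≤ x+1, 0 ≤ x+y+z ≤ 1} and p(x,y,z) = {e^{2πix}, e^{2πiy}, e^{2πiz}}. Then p⁻¹(exp_2(S¹)) = S, where S = {(x,y,z) ∈ P : x = y or y = z or z = x+1}. -/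
open Set Real

/-! Two of the points `e^{2πx}, e^{2πy}, e^{2πz}` coincide exactly when two of `x, y, z` differ
by an integer. On `P` we have `x ≤ y ≤ z ≤ x + 1`, so any two coordinates differ by `0` or `1`,
and `y = x + 1` or `z = y + 1` squeezes the chain into `z = x + 1`. -/

theorem Set.ncard_triple_le_two_iff {α : Type*} {a b c : α} :
    ({a, b, c} : Set α).ncard ≤ 2 ↔ a = b ∨ b = c ∨ a = c := by
  constructor
  · contrapose!
    rintro ⟨hab, hbc, hac⟩
    rw [ncard_insert_of_notMem (by simp [hab, hac]), ncard_pair hbc]; omega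
  · have h : ∀ u v : α, ({u, v} : Set α).ncard ≤ 2 := fun u v =>
      (ncard_insert_le u {v}).trans (by rw [ncard_singleton])
    rintro (rfl | rfl | rfl)
    · simpa using h a c
    · simpa using h a b
    · simpa using h b a

theorem Circle.exp_two_pi_mul_eq_iff {x y : ℝ} (hxy : x ≤ y) (hyx : y ≤ x + 1) :
    Circle.exp (2 * π * x) = Circle.exp (2 * π * y) ↔ y = x ∨ y = x + 1 := by
  rw [Circle.exp_eq_exp]
  constructor
  · rintro ⟨m, hm⟩
    have hm : x = y + m := by
      apply mul_left_cancel₀ (by positivity : 2 * π ≠ 0); linear_combination hm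
    have : m = 0 ∨ m = -1 := by
      have : (-1 : ℝ) ≤ m ∧ (m : ℝ) ≤ 0 := ⟨by linarith, by linarith⟩
      norm_cast at this; omega
    rcases this with rfl | rfl
    · left; simp_all
    · right; push_cast at hm; linarith
  · rintro (rfl | rfl)
    · exact ⟨0, by simp⟩
    · exact ⟨-1, by push_cast; ring⟩

/-- `p ⁻¹ (exp_2 S¹) = S`. -/
theorem prismMap_preimage_exp2 :
    prismMap ⁻¹' {A : SymPot Circle 3 | A.1.ncard ≤ 2} =
      {v : prismP | v.1.1 = v.1.2.1 ∨ v.1.2.1 = v.1.2.2 ∨ v.1.2.2 = v.1.1 + 1} := by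
  ext ⟨⟨x, y, z⟩, hxy, hyz, hzx, -, -⟩
  change ({Circle.exp (2 * π * x), Circle.exp (2 * π * y), Circle.exp (2 * π * z)} :
    Set Circle).ncard ≤ 2 ↔ x = y ∨ y = z ∨ z = x + 1
  rw [Set.ncard_triple_le_two_iff, Circle.exp_two_pi_mul_eq_iff hxy (by linarith),
    Circle.exp_two_pi_mul_eq_iff hyz (by linarith),
    Circle.exp_two_pi_mul_eq_iff (hxy.trans hyz) hzx]
  grind
end

section
/- Let P = {(x,y,z) ∈ ℝ³ : x ≤ y ≤ z ≤ x+1, 0 ≤ x+y+z ≤ 1} and p(x,y,z) = {e^{2πix}, e^{2πiy}, e^{2πiz}}. Then p⁻¹(exp_1(S¹)) = D, where D = {(x,y,z) ∈ P : (x = y = z) or (x = y = z−1) or (x+1 = y = z)}. -/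
/-!
The set `{e^{2πix}, e^{2πiy}, e^{2πiz}}` is a singleton iff `y - x` and `z - y` are integers.
On the prism both differences are nonnegative and sum to at most `z - x ≤ 1`, so
`(y - x, z - y)` is one of `(0, 0)`, `(0, 1)`, `(1, 0)`: the three cases defining `D`.
-/

open Set Real

lemma Circle.exp_two_pi_mul_eq_iff_s14 {a b : ℝ} :
    Circle.exp (2 * π * a) = Circle.exp (2 * π * b) ↔ ∃ m : ℤ, a = b + m := by
  simp only [Circle.exp_eq_exp]
  refine exists_congr fun m => ⟨fun h => ?_, fun h => by rw [h]; ring⟩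
  nlinarith [Real.pi_pos]

lemma Set.ncard_triple_le_one_iff {α : Type*} {a b c : α} :
    ({a, b, c} : Set α).ncard ≤ 1 ↔ a = b ∧ b = c := by
  rw [ncard_le_one_iff_subsingleton]
  constructor
  · intro h
    exact ⟨h (by simp) (by simp), h (by simp) (by simp)⟩
  · rintro ⟨rfl, rfl⟩
    simp

lemma int_shifts_of_le_of_le_add_one {x y z : ℝ} (hxy : x ≤ y) (hyz : y ≤ z) (hzx : z ≤ x + 1)
    {m n : ℤ} (hm : x = y + m) (hn : y = z + n) :
    (m = 0 ∧ n = 0) ∨ (m = 0 ∧ n = -1) ∨ (m = -1 ∧ n = 0) := by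
  have hm0 : m ≤ 0 := by exact_mod_cast (by linarith : (m : ℝ) ≤ 0)
  have hn0 : n ≤ 0 := by exact_mod_cast (by linarith : (n : ℝ) ≤ 0)
  have hmn : -1 ≤ m + n := by exact_mod_cast (by linarith : (-1 : ℝ) ≤ m + n)
  omega

/-- `p ⁻¹ (exp_1 S¹) = D`. -/
theorem prismMap_preimage_exp1 :
    prismMap ⁻¹' {A : SymPot Circle 3 | A.1.ncard ≤ 1} =
      {v : prismP | (v.1.1 = v.1.2.1 ∧ v.1.2.1 = v.1.2.2) ∨
        (v.1.1 = v.1.2.1 ∧ v.1.2.1 = v.1.2.2 - 1) ∨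
        (v.1.1 + 1 = v.1.2.1 ∧ v.1.2.1 = v.1.2.2)} := by
  ext ⟨⟨x, y, z⟩, hxy, hyz, hzx, -, -⟩
  change ({Circle.exp (2 * π * x), Circle.exp (2 * π * y), Circle.exp (2 * π * z)} :
      Set Circle).ncard ≤ 1 ↔ (x = y ∧ y = z) ∨ (x = y ∧ y = z - 1) ∨ (x + 1 = y ∧ y = z)
  rw [Set.ncard_triple_le_one_iff, Circle.exp_two_pi_mul_eq_iff_s14, Circle.exp_two_pi_mul_eq_iff_s14]
  constructor
  · rintro ⟨⟨m, hm⟩, n, hn⟩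
    rcases int_shifts_of_le_of_le_add_one hxy hyz hzx hm hn with
      ⟨rfl, rfl⟩ | ⟨rfl, rfl⟩ | ⟨rfl, rfl⟩
    · exact Or.inl ⟨by simpa using hm, by simpa using hn⟩
    · exact Or.inr (Or.inl ⟨by simpa using hm, by push_cast at hn; linarith⟩)
    · exact Or.inr (Or.inr ⟨by push_cast at hm; linarith, by simpa using hn⟩)
  · rintro (⟨h1, h2⟩ | ⟨h1, h2⟩ | ⟨h1, h2⟩)
    · exact ⟨⟨0, by simp [h1]⟩, 0, by simp [h2]⟩
    · exact ⟨⟨0, by simp [h1]⟩, -1, by push_cast; linarith⟩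
    · exact ⟨⟨-1, by push_cast; linarith⟩, 0, by simp [h2]⟩
end
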